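/- Unitary equivalence of marginals for vanishing entropy production: let ρ and ρ' be density matrices on ℂ^{d_S}, let ν be a faithful density matrix on ℂ^{d_R}, and let U be a unitary matrix on ℂ^{d_S}⊗ℂ^{d_R} such that U(ρ ⊗ ν)U* = ρ' ⊗ ν. Then tr(ρ^m) = tr((ρ')^m) for every natural number m ≥ 1, and there exists a unitary matrix V on ℂ^{d_S} with ρ' = V ρ V*. -/

import Mathlib

/-!
Conjugation by `U` preserves `tr((ρ ⊗ ν)^m) = tr(ρ^m) tr(ν^m)`, and `tr(ν^m) > 0` because `ν` is
faithful, so `ρ` and `ρ'` have the same power sums of eigenvalues. By Newton's identities these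
determine the elementary symmetric functions of the eigenvalues, hence the characteristic
polynomial, hence the eigenvalues themselves; two Hermitian matrices with the same eigenvalues are
conjugate by the product of their eigenvector unitaries.
-/

open Matrix Kronecker ComplexOrder

/-- Logarithm of a matrix, defined via the spectral theorem for Hermitian matrices
(junk value `0` on non-Hermitian matrices).  Since `Real.log 0 = 0`, for a positive
semidefinite matrix this is the logarithm taken on the support, with the convention
`log 0 = 0` on the kernel. -/
noncomputable def mlog {n : Type*} [Fintype n] [DecidableEq n] (A : Matrix n n ℂ) :
    Matrix n n ℂ :=
  if hA : A.IsHermitian then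
    (hA.eigenvectorUnitary : Matrix n n ℂ) *
      Matrix.diagonal (fun i => (Real.log (hA.eigenvalues i) : ℂ)) *
      (star hA.eigenvectorUnitary : Matrix n n ℂ)
  else 0

/-- von Neumann entropy `S(ρ) = -tr(ρ log ρ)`. -/
noncomputable def vnEnt {n : Type*} [Fintype n] [DecidableEq n] (ρ : Matrix n n ℂ) : ℝ :=
  -(Matrix.trace (ρ * mlog ρ)).re

/-- Relative entropy `S(ζ₁|ζ₂) = tr(ζ₁ (log ζ₁ - log ζ₂))`. -/
noncomputable def relEnt {n : Type*} [Fintype n] [DecidableEq n] (ζ₁ ζ₂ : Matrix n n ℂ) : ℝ :=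
  (Matrix.trace (ζ₁ * (mlog ζ₁ - mlog ζ₂))).re

def IsDensityMatrix {n : Type*} [Fintype n] [DecidableEq n] (ρ : Matrix n n ℂ) : Prop :=
  ρ.PosSemidef ∧ ρ.trace = 1

/-- Partial trace over the reservoir (second) factor. -/
noncomputable def ptraceR {dS dR : ℕ} (M : Matrix (Fin dS × Fin dR) (Fin dS × Fin dR) ℂ) :
    Matrix (Fin dS) (Fin dS) ℂ :=
  Matrix.of fun i j => ∑ k, M (i, k) (j, k)

/-- Partial trace over the system (first) factor. -/
noncomputable def ptraceS {dS dR : ℕ} (M : Matrix (Fin dS × Fin dR) (Fin dS × Fin dR) ℂ) :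
    Matrix (Fin dR) (Fin dR) ℂ :=
  Matrix.of fun k l => ∑ i, M (i, k) (i, l)

noncomputable def gibbs {dR : ℕ} (β : ℝ) (H : Matrix (Fin dR) (Fin dR) ℂ) :
    Matrix (Fin dR) (Fin dR) ℂ :=
  (Matrix.trace (NormedSpace.exp ((-β : ℂ) • H)))⁻¹ • NormedSpace.exp ((-β : ℂ) • H)

/-- The trace norm `‖X‖₁ = tr((X*X)^{1/2})`. -/
noncomputable def traceNorm {n : Type*} [Fintype n] [DecidableEq n] (X : Matrix n n ℂ) : ℝ :=
  (Matrix.trace ((Matrix.posSemidef_conjTranspose_mul_self X).1.eigenvectorUnitary.1 *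
    Matrix.diagonal ((fun x : ℝ => (x : ℂ)) ∘ (√·) ∘ (Matrix.posSemidef_conjTranspose_mul_self X).1.eigenvalues) *
    (star (Matrix.posSemidef_conjTranspose_mul_self X).1.eigenvectorUnitary : Matrix n n ℂ))).re

open Finset in
theorem MvPolynomial.aeval_esymm_eq_of_sum_pow_eq {σ K : Type*} [Fintype σ] [CommRing K]
    [IsDomain K] [CharZero K] {f g : σ → K}
    (h : ∀ m, 1 ≤ m → ∑ i, f i ^ m = ∑ i, g i ^ m) (k : ℕ) :
    aeval f (esymm σ K k) = aeval g (esymm σ K k) := by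
  induction k using Nat.strong_induction_on with
  | _ k ih =>
    rcases k.eq_zero_or_pos with rfl | hk
    · simp only [esymm_zero, map_one]
    have newton (u : σ → K) := congrArg (aeval u) (mul_esymm_eq_sum σ K k)
    simp only [map_mul, map_sum, map_pow, map_natCast, map_neg, map_one, psum, aeval_X]
      at newton
    refine mul_left_cancel₀ (Nat.cast_ne_zero.mpr hk.ne') ?_
    rw [newton f, newton g]
    congr 1
    refine sum_congr rfl fun a ha => ?_
    rw [mem_filter, HasAntidiagonal.mem_antidiagonal] at ha
    rw [ih a.1 ha.2, h a.2 (by omega)]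

theorem Multiset.prod_X_sub_C_eq_of_esymm_eq {R : Type*} [CommRing R] {s t : Multiset R}
    (hcard : card s = card t) (h : ∀ k, s.esymm k = t.esymm k) :
    (s.map fun r => Polynomial.X - Polynomial.C r).prod =
      (t.map fun r => Polynomial.X - Polynomial.C r).prod := by
  simp only [prod_X_sub_X_eq_sum_esymm, hcard, h]

open Finset Polynomial in
theorem Fintype.prod_X_sub_C_eq_of_sum_pow_eq {σ K : Type*} [Fintype σ] [CommRing K]
    [IsDomain K] [CharZero K] {f g : σ → K}
    (h : ∀ m, 1 ≤ m → ∑ i, f i ^ m = ∑ i, g i ^ m) :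
    ∏ i, (X - C (f i)) = ∏ i, (X - C (g i)) := by
  have key := Multiset.prod_X_sub_C_eq_of_esymm_eq (s := univ.val.map f) (t := univ.val.map g)
    (by simp) fun k => by
      rw [← MvPolynomial.aeval_esymm_eq_multiset_esymm (σ := σ) (R := K),
        ← MvPolynomial.aeval_esymm_eq_multiset_esymm (σ := σ) (R := K),
        MvPolynomial.aeval_esymm_eq_of_sum_pow_eq h]
  simpa only [prod_eq_multiset_prod, Multiset.map_map, Function.comp_def] using key

open Unitary

namespace Matrix

variable {n : Type*} [Fintype n] [DecidableEq n]

theorem kronecker_pow {m R : Type*} [Fintype m] [DecidableEq m] [CommSemiring R]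
    (A : Matrix m m R) (B : Matrix n n R) (k : ℕ) : (A ⊗ₖ B) ^ k = (A ^ k) ⊗ₖ (B ^ k) := by
  induction k with
  | zero => simp
  | succ k ih => rw [pow_succ, ih, pow_succ, pow_succ, mul_kronecker_mul]

theorem trace_pow_kronecker {m R : Type*} [Fintype m] [DecidableEq m] [CommSemiring R]
    (A : Matrix m m R) (B : Matrix n n R) (k : ℕ) :
    trace ((A ⊗ₖ B) ^ k) = trace (A ^ k) * trace (B ^ k) := by
  rw [kronecker_pow, trace_kronecker]

theorem trace_conjStarAlgAut {R : Type*} [CommRing R] [StarRing R]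
    (u : unitary (Matrix n n R)) (A : Matrix n n R) :
    trace (conjStarAlgAut R _ u A) = trace A := by
  rw [conjStarAlgAut_apply, trace_mul_cycle, coe_star_mul_self, one_mul]

namespace IsHermitian

variable {𝕜 : Type*} [RCLike 𝕜] {A B : Matrix n n 𝕜}

theorem trace_pow (hA : A.IsHermitian) (k : ℕ) :
    trace (A ^ k) = ∑ i, (hA.eigenvalues i : 𝕜) ^ k := by
  conv_lhs => rw [hA.spectral_theorem, ← map_pow, trace_conjStarAlgAut, diagonal_pow,
    trace_diagonal]
  rfl

theorem charpoly_eq_of_trace_pow_eq (hA : A.IsHermitian) (hB : B.IsHermitian)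
    (h : ∀ k, 1 ≤ k → trace (A ^ k) = trace (B ^ k)) : A.charpoly = B.charpoly := by
  rw [hA.charpoly_eq, hB.charpoly_eq]
  exact Fintype.prod_X_sub_C_eq_of_sum_pow_eq fun k hk => by
    rw [← hA.trace_pow, ← hB.trace_pow, h k hk]

theorem exists_unitary_conj_eq_of_charpoly_eq (hA : A.IsHermitian) (hB : B.IsHermitian)
    (h : A.charpoly = B.charpoly) :
    ∃ V : unitary (Matrix n n 𝕜), conjStarAlgAut 𝕜 _ V A = B := by
  refine ⟨hB.eigenvectorUnitary * star hA.eigenvectorUnitary, ?_⟩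
  rw [conjStarAlgAut_mul_apply, conjStarAlgAut_star_eigenvectorUnitary,
    (hA.eigenvalues_eq_eigenvalues_iff hB).mpr h, ← hB.spectral_theorem]

end IsHermitian

theorem PosDef.trace_pow_pos {𝕜 : Type*} [RCLike 𝕜] [Nonempty n] {A : Matrix n n 𝕜}
    (hA : A.PosDef) (k : ℕ) : 0 < trace (A ^ k) := by
  rw [hA.isHermitian.trace_pow]
  exact Finset.sum_pos (fun i _ => pow_pos (RCLike.ofReal_pos.mpr (hA.eigenvalues_pos i)) k)
    Finset.univ_nonempty

end Matrix

/-- **Unitary equivalence of marginals for vanishing entropy production.**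
If `U (ρ ⊗ ν) U* = ρ' ⊗ ν` for a faithful density matrix `ν` and a unitary `U`,
then `tr(ρ^m) = tr(ρ'^m)` for all `m ≥ 1` and `ρ'` is unitarily equivalent
to `ρ`. -/
theorem marginals_unitarily_equivalent {dS dR : ℕ}
    (ρ ρ' : Matrix (Fin dS) (Fin dS) ℂ) (ν : Matrix (Fin dR) (Fin dR) ℂ)
    (hρ : IsDensityMatrix ρ) (hρ' : IsDensityMatrix ρ')
    (hν : ν.PosDef) (hνtr : ν.trace = 1)
    (U : Matrix (Fin dS × Fin dR) (Fin dS × Fin dR) ℂ)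
    (hU : U ∈ Matrix.unitaryGroup (Fin dS × Fin dR) ℂ)
    (h : U * (ρ ⊗ₖ ν) * Uᴴ = ρ' ⊗ₖ ν) :
    (∀ m : ℕ, 1 ≤ m → Matrix.trace (ρ ^ m) = Matrix.trace (ρ' ^ m)) ∧
    ∃ V ∈ Matrix.unitaryGroup (Fin dS) ℂ, ρ' = V * ρ * Vᴴ := by
  obtain ⟨⟨hρH, -⟩, -⟩ := hρ
  obtain ⟨⟨hρ'H, -⟩, -⟩ := hρ'
  have hconj : conjStarAlgAut ℂ _ ⟨U, hU⟩ (ρ ⊗ₖ ν) = ρ' ⊗ₖ ν := h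
  have : Nonempty (Fin dR) := by
    by_contra hempty
    rw [not_nonempty_iff] at hempty
    simp [trace] at hνtr
  have htrace (m : ℕ) : trace (ρ ^ m) = trace (ρ' ^ m) := by
    refine mul_right_cancel₀ (hν.trace_pow_pos m).ne' ?_
    rw [← trace_pow_kronecker, ← trace_pow_kronecker, ← hconj, ← map_pow, trace_conjStarAlgAut]
  obtain ⟨V, hV⟩ := hρH.exists_unitary_conj_eq_of_charpoly_eq hρ'H
    (hρH.charpoly_eq_of_trace_pow_eq hρ'H fun m _ => htrace m)
  exact ⟨fun m _ => htrace m, V, V.2, hV.symm⟩
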